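/- arXiv:2511.10497 — 8 statements merged into one kernel-verified Lean document; each statement's English description precedes it below -/
import Mathlib

section
/- Let G be an n-vertex graph with minimum degree at least (n+1)/2. Then G is Hamilton-connected. -/
/-!
Under Ore's condition deg x + deg y ≥ n + 1 for distinct nonadjacent x, y, list all vertices
starting at `a` and ending at `b`, and call a consecutive pair that is not an edge a gap. If
(x, y) is a gap, then among the n - 1 consecutive pairs (u, v) at least deg x - 1 have x ~ u and
at least deg y - 1 have y ~ v, while (x, y) itself is of neither kind; so some pair has both.
Reversing the segment of the list between (x, y) and (u, v) trades these two pairs for the edges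
xu and yv, so the number of gaps drops while the endpoints stay. When no gap is left, the list
is a Hamilton path from `a` to `b`.
-/

open SimpleGraph List

namespace List
variable {α : Type*}

theorem mem_consecutivePairs_iff {l : List α} {u v : α} :
    (u, v) ∈ l.consecutivePairs ↔ ∃ s t, l = s ++ u :: v :: t := by
  induction l with
  | nil => simp
  | cons a l ih =>
    cases l with
    | nil =>
      simp only [consecutivePairs, tail_cons, zip_nil_right, not_mem_nil, false_iff]
      rintro ⟨s, t, h⟩
      have := congrArg length h
      simp at this
      omega
    | cons b l =>
      simp only [consecutivePairs, tail_cons, zip_cons_cons, mem_cons, Prod.mk.injEq] at ih ⊢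
      rw [ih]
      constructor
      · rintro (⟨rfl, rfl⟩ | ⟨s, t, h⟩)
        · exact ⟨[], l, rfl⟩
        · exact ⟨a :: s, t, by simp [h]⟩
      · rintro ⟨_ | ⟨c, s⟩, t, h⟩
        · simp_all
        · simp only [cons_append, cons.injEq] at h
          exact Or.inr ⟨s, t, h.2⟩

theorem exists_mem_consecutivePairs_of_ne_getLast {l : List α} {w : α} (hw : w ∈ l)
    (hne : l ≠ []) (hlast : w ≠ l.getLast hne) : ∃ w', (w, w') ∈ l.consecutivePairs := by
  obtain ⟨s, _ | ⟨w', t⟩, rfl⟩ := append_of_mem hw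
  · simp at hlast
  · exact ⟨w', mem_consecutivePairs_iff.2 ⟨s, t, rfl⟩⟩

theorem exists_mem_consecutivePairs_of_ne_head {l : List α} {w : α} (hw : w ∈ l)
    (hne : l ≠ []) (hhead : w ≠ l.head hne) : ∃ w', (w', w) ∈ l.consecutivePairs := by
  obtain ⟨s, t, rfl⟩ := append_of_mem hw
  rcases eq_nil_or_concat s with rfl | ⟨s, w', rfl⟩
  · simp at hhead
  · exact ⟨w', mem_consecutivePairs_iff.2 ⟨s, t, by simp⟩⟩

end List

namespace SimpleGraph
variable {V : Type*} {G : SimpleGraph V}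

theorem exists_mem_consecutivePairs_adj_adj [Fintype V] [DecidableEq V] [DecidableRel G.Adj]
    {l : List V} {x y : V} (hl : ∀ v, v ∈ l) (hxy : (x, y) ∈ l.consecutivePairs)
    (hdeg : l.length + 1 ≤ G.degree x + G.degree y) :
    ∃ u v, (u, v) ∈ l.consecutivePairs ∧ G.Adj x u ∧ G.Adj y v := by
  by_contra! h
  have hne : l ≠ [] := by rintro rfl; simp at hxy
  set T := l.consecutivePairs.toFinset
  set A := T.filter (G.Adj x ·.1)
  set B := T.filter (G.Adj y ·.2)
  have hA : G.degree x ≤ A.card + 1 := by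
    rw [← card_neighborFinset_eq_degree]
    calc _ ≤ (A.image Prod.fst ∪ {l.getLast hne}).card := by
          refine Finset.card_le_card fun w hw => ?_
          rw [mem_neighborFinset] at hw
          by_cases hlast : w = l.getLast hne
          · simp [hlast]
          obtain ⟨w', hw'⟩ := exists_mem_consecutivePairs_of_ne_getLast (hl w) hne hlast
          exact Finset.mem_union_left _
            (Finset.mem_image.2 ⟨(w, w'), by simp [A, T, hw, hw'], rfl⟩)
      _ ≤ _ := (Finset.card_union_le _ _).trans (by simpa using Finset.card_image_le)
  have hB : G.degree y ≤ B.card + 1 := by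
    rw [← card_neighborFinset_eq_degree]
    calc _ ≤ (B.image Prod.snd ∪ {l.head hne}).card := by
          refine Finset.card_le_card fun w hw => ?_
          rw [mem_neighborFinset] at hw
          by_cases hhead : w = l.head hne
          · simp [hhead]
          obtain ⟨w', hw'⟩ := exists_mem_consecutivePairs_of_ne_head (hl w) hne hhead
          exact Finset.mem_union_left _
            (Finset.mem_image.2 ⟨(w', w), by simp [B, T, hw, hw'], rfl⟩)
      _ ≤ _ := (Finset.card_union_le _ _).trans (by simpa using Finset.card_image_le)
  have hdisj : Disjoint A B :=
    Finset.disjoint_filter.2 fun p hp hxp hyp => h p.1 p.2 (by simpa [T] using hp) hxp hyp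
  have hsub : A ∪ B ⊆ T.erase (x, y) := by
    intro p hp
    simp only [A, B, Finset.mem_union, Finset.mem_filter] at hp
    refine Finset.mem_erase.2 ⟨?_, by rcases hp with hp | hp <;> exact hp.1⟩
    rintro rfl
    rcases hp with hp | hp <;> exact G.irrefl hp.2
  have hT : T.card ≤ l.length - 1 := (List.toFinset_card_le _).trans (by simp)
  have hxyT : (x, y) ∈ T := List.mem_toFinset.2 hxy
  have := Finset.card_le_card hsub
  rw [Finset.card_union_of_disjoint hdisj, Finset.card_erase_of_mem hxyT] at this
  have := Finset.card_pos.2 ⟨_, hxyT⟩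
  omega

def gapCount (G : SimpleGraph V) [DecidableRel G.Adj] : List V → ℕ
  | u :: v :: l => (if G.Adj u v then 0 else 1) + G.gapCount (v :: l)
  | _ => 0

section gapCount
variable [DecidableRel G.Adj]

theorem gapCount_append {l₁ l₂ : List V} {u v : V} (h₁ : l₁.getLast? = some u)
    (h₂ : l₂.head? = some v) :
    G.gapCount (l₁ ++ l₂) =
      G.gapCount l₁ + (if G.Adj u v then 0 else 1) + G.gapCount l₂ := by
  obtain ⟨l₁, rfl⟩ := getLast?_eq_some_iff.1 h₁
  obtain ⟨l₂, rfl⟩ := head?_eq_some_iff.1 h₂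
  clear h₁ h₂
  induction l₁ with
  | nil => simp [gapCount]
  | cons a l₁ ih =>
    cases l₁ with
    | nil => simp [gapCount]; omega
    | cons b l₁ =>
      simp only [cons_append, gapCount] at ih ⊢
      rw [ih]
      omega

theorem gapCount_reverse (l : List V) : G.gapCount l.reverse = G.gapCount l := by
  induction l using List.twoStepInduction with
  | nil | singleton => rfl
  | cons_cons u v l _ ih =>
    rw [reverse_cons, gapCount_append (u := v) (v := u) (by simp) rfl, ih v]
    simp [gapCount, G.adj_comm]
    omega

theorem gapCount_append_reverse_append_lt {P Q S : List V} {p q r s : V}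
    (hP : P.getLast? = some p) (hq : Q.head? = some q) (hr : Q.getLast? = some r)
    (hS : S.head? = some s) (hpr : G.Adj p r) (hqs : G.Adj q s)
    (hgap : ¬G.Adj p q ∨ ¬G.Adj r s) :
    G.gapCount (P ++ Q.reverse ++ S) < G.gapCount (P ++ Q ++ S) := by
  rw [gapCount_append (u := q) (by simp [hq]) hS, gapCount_append (v := r) hP (by simp [hr]),
    gapCount_append (u := r) (by simp [hr]) hS, gapCount_append hP hq, gapCount_reverse]
  split_ifs <;> simp_all

theorem exists_perm_gapCount_lt {l : List V} {u v x y : V}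
    (huv : (u, v) ∈ l.consecutivePairs) (hxy : (x, y) ∈ l.consecutivePairs)
    (hxu : G.Adj x u) (hyv : G.Adj y v) (hnxy : ¬G.Adj x y) :
    ∃ l', l' ~ l ∧ l'.head? = l.head? ∧ l'.getLast? = l.getLast? ∧
      G.gapCount l' < G.gapCount l := by
  have reverse_segment : ∀ {P M S : List V} {p q r s : V}, l = P ++ p :: q :: M ++ r :: s :: S →
      G.Adj p r → G.Adj q s → (¬G.Adj p q ∨ ¬G.Adj r s) →
      ∃ l', l' ~ l ∧ l'.head? = l.head? ∧ l'.getLast? = l.getLast? ∧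
        G.gapCount l' < G.gapCount l := by
    rintro P M S p q r s rfl hpr hqs hgap
    have hlt := gapCount_append_reverse_append_lt (P := P ++ [p]) (Q := q :: M ++ [r])
      (S := s :: S) (by simp) rfl (getLast?_eq_some_iff.2 ⟨q :: M, rfl⟩) rfl hpr hqs hgap
    refine ⟨P ++ [p] ++ (q :: M ++ [r]).reverse ++ s :: S, ?_, by simp, by simp [getLast?_cons],
      by simpa using hlt⟩
    simpa using ((reverse_perm (q :: M ++ [r])).append_right (s :: S)).append_left (P ++ [p])
  obtain ⟨s₁, t₁, h₁⟩ := mem_consecutivePairs_iff.1 huv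
  obtain ⟨s₂, t₂, h₂⟩ := mem_consecutivePairs_iff.1 hxy
  rcases append_eq_append_iff.1 (h₁.symm.trans h₂) with ⟨M, rfl, hM⟩ | ⟨M, rfl, hM⟩
  · rcases M with _ | ⟨_, M⟩
    · simp only [nil_append, cons.injEq] at hM
      exact absurd hM.1 (G.ne_of_adj hxu).symm
    simp only [cons_append, cons.injEq] at hM
    obtain ⟨rfl, hM⟩ := hM
    rcases M with _ | ⟨_, M⟩
    · simp only [nil_append, cons.injEq] at hM
      exact absurd (hM.1 ▸ hyv) (fun h => hnxy h.symm)
    simp only [cons_append, cons.injEq] at hM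
    obtain ⟨rfl, rfl⟩ := hM
    exact reverse_segment h₂ hxu.symm hyv.symm (Or.inr hnxy)
  · rcases M with _ | ⟨_, M⟩
    · simp only [nil_append, cons.injEq] at hM
      exact absurd hM.1 (G.ne_of_adj hxu)
    simp only [cons_append, cons.injEq] at hM
    obtain ⟨rfl, hM⟩ := hM
    rcases M with _ | ⟨_, M⟩
    · simp only [nil_append, cons.injEq] at hM
      exact absurd (hM.1 ▸ hxu) hnxy
    simp only [cons_append, cons.injEq] at hM
    obtain ⟨rfl, rfl⟩ := hM
    exact reverse_segment h₁ hxu hyv (Or.inl hnxy)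

end gapCount

theorem exists_isHamiltonian_of_isChain [DecidableEq V] {l : List V} {a b : V}
    (hnd : l.Nodup) (hl : ∀ v, v ∈ l) (hc : l.IsChain G.Adj) (ha : l.head? = some a)
    (hb : l.getLast? = some b) :
    ∃ p : G.Walk a b, p.IsHamiltonian := by
  have hne : l ≠ [] := by rintro rfl; simp at ha
  refine ⟨(Walk.ofSupport l hne hc).copy ?_ ?_, ?_⟩
  · simpa [head?_eq_some_head hne] using ha
  · simpa [getLast?_eq_some_getLast hne] using hb
  · refine Walk.IsPath.isHamiltonian_of_mem ?_ ?_
    · exact (Walk.isPath_def _).2 (by simpa using hnd)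
    · simpa using hl

theorem exists_isHamiltonian_of_ore_of_nodup [Fintype V] [DecidableEq V] [DecidableRel G.Adj]
    (hdeg : ∀ x y, x ≠ y → ¬G.Adj x y → Fintype.card V + 1 ≤ G.degree x + G.degree y)
    {l : List V} {a b : V} (hnd : l.Nodup) (hl : ∀ v, v ∈ l) (ha : l.head? = some a)
    (hb : l.getLast? = some b) : ∃ p : G.Walk a b, p.IsHamiltonian := by
  induction hn : G.gapCount l using Nat.strong_induction_on generalizing l with
  | _ n ih =>
  by_cases hc : l.IsChain G.Adj
  · exact exists_isHamiltonian_of_isChain hnd hl hc ha hb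
  obtain ⟨x, y, s, t, hst, hnxy⟩ : ∃ x y s t, l = s ++ x :: y :: t ∧ ¬G.Adj x y := by
    simpa [isChain_iff_forall_rel_of_append_cons_cons] using hc
  have hxy : (x, y) ∈ l.consecutivePairs := mem_consecutivePairs_iff.2 ⟨s, t, hst⟩
  have hne : x ≠ y := by
    rintro rfl
    simp [hst, nodup_append] at hnd
  obtain ⟨u, v, huv, hxu, hyv⟩ := exists_mem_consecutivePairs_adj_adj hl hxy
    ((Nat.add_le_add_right hnd.length_le_card 1).trans (hdeg x y hne hnxy))
  obtain ⟨l', hperm, hhead, hlast, hlt⟩ := exists_perm_gapCount_lt huv hxy hxu hyv hnxy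
  exact ih _ (hn ▸ hlt) (hperm.nodup_iff.2 hnd) (fun w => hperm.mem_iff.2 (hl w))
    (hhead ▸ ha) (hlast ▸ hb) rfl

def IsHamiltonConnected [DecidableEq V] (G : SimpleGraph V) : Prop :=
  ∀ a b, a ≠ b → ∃ p : G.Walk a b, p.IsHamiltonian

theorem isHamiltonConnected_of_ore [Fintype V] [DecidableEq V] [DecidableRel G.Adj]
    (hdeg : ∀ x y, x ≠ y → ¬G.Adj x y → Fintype.card V + 1 ≤ G.degree x + G.degree y) :
    G.IsHamiltonConnected := by
  intro a b hab
  refine exists_isHamiltonian_of_ore_of_nodup hdeg (l := a :: (Finset.univ \ {a, b}).toList ++ [b])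
    ?_ ?_ (by simp) (getLast?_eq_some_iff.2 ⟨a :: _, rfl⟩)
  · simp [nodup_append, hab, Finset.nodup_toList]
  · intro v
    by_cases hva : v = a <;> by_cases hvb : v = b <;> simp [hva, hvb]

end SimpleGraph

theorem hamilton_connected_of_minDegree_general {V : Type*} [Fintype V] [DecidableEq V]
    (G : SimpleGraph V) [DecidableRel G.Adj]
    (hδ : ((Fintype.card V : ℝ) + 1) / 2 ≤ G.minDegree) :
    ∀ a b : V, a ≠ b → ∃ p : G.Walk a b, p.IsHamiltonian := by
  have hδ' : Fintype.card V + 1 ≤ 2 * G.minDegree := by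
    rw [div_le_iff₀ two_pos] at hδ
    have : ((Fintype.card V + 1 : ℕ) : ℝ) ≤ ((2 * G.minDegree : ℕ) : ℝ) := by
      push_cast
      linarith
    exact_mod_cast this
  refine isHamiltonConnected_of_ore fun x y _ _ => ?_
  have := G.minDegree_le_degree x
  have := G.minDegree_le_degree y
  omega

/-- If `G` is a graph on `n ≥ 3` vertices with minimum degree at least `(n+1)/2`, then `G`
is Hamilton-connected: any two distinct vertices are the endpoints of a Hamilton path. -/
theorem hamilton_connected_of_minDegree {V : Type*} [Fintype V] [DecidableEq V]
    (G : SimpleGraph V) [DecidableRel G.Adj]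
    (hn : 3 ≤ Fintype.card V)
    (hδ : ((Fintype.card V : ℝ) + 1) / 2 ≤ G.minDegree) :
    ∀ a b : V, a ≠ b → ∃ p : G.Walk a b, p.IsHamiltonian :=
  hamilton_connected_of_minDegree_general G hδ
end

section
/- Let n, r ≥ 1 be integers, let φ be an r-edge-colouring of the complete graph K_n, and let v₀ be any vertex. Suppose that K_n contains no switch, i.e., no 4-cycle in which exactly two colours each appear an odd number of times. Then the vertices of K_n other than v₀ can be partitioned into (possibly empty) sets V₁, …, V_r such that each induced subgraph on V_i is a monochromatic clique, all these cliques have the same colour, and for every pair i ≠ j all edges between V_i and V_j receive a single common colour. -/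
/-!
Colour each vertex `v ≠ v₀` by `φ s(v₀, v)`. A 4-cycle whose four colours form the multiset
`{a, b, e, e}` with `a ≠ b` is a switch, so in a switch-free colouring two equal colours on a
4-cycle, adjacent or opposite, force the remaining two colours to be equal. With `v₀` on the
cycle this says that the colour of `x y` depends only on `x` and the class of `y`, which makes
the edges between two classes monochromatic. The colour of an edge inside one class equals,
through a 4-cycle alternating between two classes, the colour of an edge inside any other.
-/

open SimpleGraph

/-- A 4-cycle `u v x y u` (on pairwise distinct vertices) is a *switch* for the edge-colouring
`φ` of `K_n` if exactly two colours each appear an odd number of times among its four edges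
(and all other colours appear an even number of times). -/
def IsSwitch {n r : ℕ} (φ : Sym2 (Fin n) → Fin r) (u v x y : Fin n) : Prop :=
  ([u, v, x, y] : List (Fin n)).Nodup ∧
    ∃ c₁ c₂ : Fin r, c₁ ≠ c₂ ∧
      ∀ c : Fin r,
        Odd (([s(u, v), s(v, x), s(x, y), s(y, u)].map φ).count c) ↔ (c = c₁ ∨ c = c₂)

theorem List.odd_count_iff_of_perm {α : Type*} [DecidableEq α] {l : List α} {a b e : α}
    (hab : a ≠ b) (hl : l.Perm [a, b, e, e]) (c : α) :
    Odd (l.count c) ↔ c = a ∨ c = b := by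
  rw [hl.count_eq]
  by_cases hca : a = c <;> by_cases hcb : b = c <;> by_cases hce : e = c <;>
    simp_all [Nat.odd_iff, eq_comm]

section

variable {n r : ℕ} {φ : Sym2 (Fin n) → Fin r}

theorem isSwitch_of_perm {u v x y : Fin n} {a b e : Fin r}
    (hnd : [u, v, x, y].Nodup) (hab : a ≠ b)
    (hl : ([s(u, v), s(v, x), s(x, y), s(y, u)].map φ).Perm [a, b, e, e]) :
    IsSwitch φ u v x y :=
  ⟨hnd, a, b, hab, List.odd_count_iff_of_perm hab hl⟩

def SwitchFree (φ : Sym2 (Fin n) → Fin r) : Prop :=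
  ∀ u v x y : Fin n, ¬IsSwitch φ u v x y

namespace SwitchFree

theorem eq_of_opposite_eq (h : SwitchFree φ) {u v x y : Fin n} (hnd : [u, v, x, y].Nodup)
    (he : φ s(v, x) = φ s(y, u)) : φ s(u, v) = φ s(x, y) := by
  by_contra hab
  refine h u v x y (isSwitch_of_perm (e := φ s(v, x)) hnd hab ?_)
  simp only [List.map_cons, List.map_nil]
  rw [← he]
  exact (List.Perm.swap _ _ _).cons _

theorem eq_of_adjacent_eq (h : SwitchFree φ) {u v x y : Fin n} (hnd : [u, v, x, y].Nodup)
    (he : φ s(y, u) = φ s(u, v)) : φ s(v, x) = φ s(x, y) := by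
  by_contra hab
  refine h u v x y (isSwitch_of_perm (e := φ s(u, v)) hnd hab ?_)
  simp only [List.map_cons, List.map_nil]
  rw [he]
  exact (List.rotate_perm _ 1).symm

variable {v₀ : Fin n}

theorem colour_eq_of_root_colour_eq (h : SwitchFree φ) {x y y' : Fin n}
    (hx : x ≠ v₀) (hy : y ≠ v₀) (hy' : y' ≠ v₀) (hxy : x ≠ y) (hxy' : x ≠ y')
    (hc : φ s(v₀, y) = φ s(v₀, y')) : φ s(x, y) = φ s(x, y') := by
  rcases eq_or_ne y y' with rfl | hyy'
  · rfl
  rw [Sym2.eq_swap]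
  refine h.eq_of_adjacent_eq ?_ (by rw [Sym2.eq_swap, hc])
  simp [hxy', hyy', hx.symm, hy.symm, hy'.symm, hxy.symm]

theorem colour_eq_of_between_classes (h : SwitchFree φ) {x x' y y' : Fin n} {i j : Fin r}
    (hij : i ≠ j) (hx : x ≠ v₀) (hx' : x' ≠ v₀) (hy : y ≠ v₀) (hy' : y' ≠ v₀)
    (hxi : φ s(v₀, x) = i) (hx'i : φ s(v₀, x') = i)
    (hyj : φ s(v₀, y) = j) (hy'j : φ s(v₀, y') = j) :
    φ s(x, y) = φ s(x', y') := by
  have hne : ∀ {a b : Fin n}, φ s(v₀, a) = i → φ s(v₀, b) = j → a ≠ b := by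
    rintro a _ ha hb rfl
    exact hij (ha ▸ hb)
  calc φ s(x, y) = φ s(x, y') :=
        h.colour_eq_of_root_colour_eq hx hy hy' (hne hxi hyj) (hne hxi hy'j) (hyj.trans hy'j.symm)
    _ = φ s(y', x) := Sym2.eq_swap ▸ rfl
    _ = φ s(y', x') :=
        h.colour_eq_of_root_colour_eq hy' hx hx' (hne hxi hy'j).symm (hne hx'i hy'j).symm
          (hxi.trans hx'i.symm)
    _ = φ s(x', y') := by rw [Sym2.eq_swap]

theorem colour_eq_within_class (h : SwitchFree φ) {x y x' y' : Fin n} {i : Fin r}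
    (hx : x ≠ v₀) (hy : y ≠ v₀) (hx' : x' ≠ v₀) (hy' : y' ≠ v₀) (hxy : x ≠ y) (hxy' : x' ≠ y')
    (hxi : φ s(v₀, x) = i) (hyi : φ s(v₀, y) = i) (hx'i : φ s(v₀, x') = i)
    (hy'i : φ s(v₀, y') = i) :
    φ s(x, y) = φ s(x', y') := by
  have move : ∀ {a b b' : Fin n}, a ≠ v₀ → b ≠ v₀ → b' ≠ v₀ → a ≠ b → a ≠ b' →
      φ s(v₀, b) = i → φ s(v₀, b') = i → φ s(a, b) = φ s(a, b') :=
    fun ha hb hb' hab hab' hbi hb'i =>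
      h.colour_eq_of_root_colour_eq ha hb hb' hab hab' (hbi.trans hb'i.symm)
  rw [Sym2.eq_swap (a := x)]
  rcases eq_or_ne x' y with rfl | hx'y
  · exact move hx' hx hy' hxy.symm hxy' hxi hy'i
  · rw [move hy hx hx' hxy.symm (Ne.symm hx'y) hxi hx'i, Sym2.eq_swap]
    exact move hx' hy hy' hx'y hxy' hyi hy'i

theorem colour_eq_within_classes (h : SwitchFree φ) {x y x' y' : Fin n} {i j : Fin r}
    (hx : x ≠ v₀) (hy : y ≠ v₀) (hx' : x' ≠ v₀) (hy' : y' ≠ v₀) (hxy : x ≠ y) (hxy' : x' ≠ y')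
    (hxi : φ s(v₀, x) = i) (hyi : φ s(v₀, y) = i) (hx'j : φ s(v₀, x') = j)
    (hy'j : φ s(v₀, y') = j) :
    φ s(x, y) = φ s(x', y') := by
  rcases eq_or_ne i j with rfl | hij
  · exact h.colour_eq_within_class hx hy hx' hy' hxy hxy' hxi hyi hx'j hy'j
  have hne : ∀ {a b : Fin n}, φ s(v₀, a) = i → φ s(v₀, b) = j → a ≠ b := by
    rintro a _ ha hb rfl
    exact hij (ha ▸ hb)
  -- the cycle `x y x' y'` alternates between the two classes
  refine h.eq_of_opposite_eq ?_ ?_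
  · simp [hxy, hxy', hne hxi hx'j, hne hxi hy'j, hne hyi hx'j, hne hyi hy'j]
  · rw [Sym2.eq_swap (a := y')]
    exact h.colour_eq_of_between_classes hij hy hx hx' hy' hyi hxi hx'j hy'j

end SwitchFree

end

theorem exists_forall_eq_of_forall_eq {α γ : Type*} [Nonempty γ] {s : Set α} {f : α → γ}
    (h : ∀ a ∈ s, ∀ b ∈ s, f a = f b) : ∃ c, ∀ a ∈ s, f a = c := by
  rcases s.eq_empty_or_nonempty with rfl | ⟨b, hb⟩
  · exact ⟨Classical.arbitrary γ, by simp⟩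
  · exact ⟨f b, fun a ha => h a ha b hb⟩

theorem switch_free_structure_general (n r : ℕ)
    (φ : Sym2 (Fin n) → Fin r) (v₀ : Fin n)
    (hsw : ∀ u v x y : Fin n, ¬IsSwitch φ u v x y) :
    ∃ Vp : Fin r → Finset (Fin n),
      (∀ i j, i ≠ j → Disjoint (Vp i) (Vp j)) ∧
      Finset.univ.erase v₀ = Finset.univ.biUnion Vp ∧
      (∃ c₀ : Fin r, ∀ i, ∀ x ∈ Vp i, ∀ y ∈ Vp i, x ≠ y → φ s(x, y) = c₀) ∧
      (∀ i j, i ≠ j → ∃ c : Fin r, ∀ x ∈ Vp i, ∀ y ∈ Vp j, φ s(x, y) = c) := by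
  have h : SwitchFree φ := hsw
  have : Nonempty (Fin r) := ⟨φ s(v₀, v₀)⟩
  let Vp i := (Finset.univ.erase v₀).filter fun v => φ s(v₀, v) = i
  have hmem : ∀ {i v}, v ∈ Vp i ↔ v ≠ v₀ ∧ φ s(v₀, v) = i := by simp [Vp]
  refine ⟨Vp, fun i j hij => Finset.disjoint_filter.2 fun _ _ hi hj => hij (hi ▸ hj),
    (Finset.biUnion_filter_eq_of_maps_to fun _ _ => Finset.mem_univ _).symm, ?_, ?_⟩
  · obtain ⟨c₀, hc₀⟩ := exists_forall_eq_of_forall_eq (f := fun p : Fin n × Fin n => φ s(p.1, p.2))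
      (s := {p | p.1 ≠ p.2 ∧ ∃ i, p.1 ∈ Vp i ∧ p.2 ∈ Vp i}) <| by
        rintro ⟨x, y⟩ ⟨hxy, i, hx, hy⟩ ⟨x', y'⟩ ⟨hxy', j, hx', hy'⟩
        rw [hmem] at hx hy hx' hy'
        exact h.colour_eq_within_classes hx.1 hy.1 hx'.1 hy'.1 hxy hxy' hx.2 hy.2 hx'.2 hy'.2
    exact ⟨c₀, fun i x hx y hy hxy => hc₀ (x, y) ⟨hxy, i, hx, hy⟩⟩
  · intro i j hij
    obtain ⟨c, hc⟩ := exists_forall_eq_of_forall_eq (f := fun p : Fin n × Fin n => φ s(p.1, p.2))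
      (s := {p | p.1 ∈ Vp i ∧ p.2 ∈ Vp j}) <| by
        rintro ⟨x, y⟩ ⟨hx, hy⟩ ⟨x', y'⟩ ⟨hx', hy'⟩
        rw [hmem] at hx hy hx' hy'
        exact h.colour_eq_of_between_classes hij hx.1 hx'.1 hy.1 hy'.1 hx.2 hx'.2 hy.2 hy'.2
    exact ⟨c, fun x hx y hy => hc (x, y) ⟨hx, hy⟩⟩

/-- If an `r`-edge-colouring `φ` of `K_n` contains no switch, then for any vertex `v₀` the
remaining vertices can be partitioned into sets `V₁, …, V_r` such that each `V_i` induces a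
monochromatic clique, all these cliques have the same colour, and for `i ≠ j` all edges
between `V_i` and `V_j` receive a single common colour. -/
theorem switch_free_structure (n r : ℕ) (hn : 1 ≤ n) (hr : 1 ≤ r)
    (φ : Sym2 (Fin n) → Fin r) (v₀ : Fin n)
    (hsw : ∀ u v x y : Fin n, ¬IsSwitch φ u v x y) :
    ∃ Vp : Fin r → Finset (Fin n),
      (∀ i j, i ≠ j → Disjoint (Vp i) (Vp j)) ∧
      Finset.univ.erase v₀ = Finset.univ.biUnion Vp ∧
      (∃ c₀ : Fin r, ∀ i, ∀ x ∈ Vp i, ∀ y ∈ Vp i, x ≠ y → φ s(x, y) = c₀) ∧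
      (∀ i j, i ≠ j → ∃ c : Fin r, ∀ x ∈ Vp i, ∀ y ∈ Vp j, φ s(x, y) = c) :=
  switch_free_structure_general n r φ v₀ hsw
end

section
/- Let φ be an r-edge-colouring of K_n containing no switch, and let v₀ be a fixed vertex. For each colour i let V_i be the set of vertices v with φ(v₀v) = i. Then for all (not necessarily distinct) i, j, all edges of K_n with one endpoint in V_i and the other in V_j receive the same colour. -/
open SimpleGraph

/-! A 4-cycle `v₀ y x y'` with `φ(v₀y) = φ(v₀y')` has colour multiset `{j, a, b, j}`, so it is a
switch exactly when `a = φ(yx)` and `b = φ(xy')` differ. Hence in a switch-free colouring,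
`φ(xy)` depends only on the colour class of `y`, and by symmetry also only on that of `x`. -/

theorem List.odd_count_pair_iff {α : Type*} [DecidableEq α] {a b : α} (j : α) (hab : a ≠ b)
    (c : α) : Odd ([j, a, b, j].count c) ↔ c = a ∨ c = b := by
  simp only [List.count_cons, List.count_nil, beq_iff_eq]
  by_cases hj : j = c <;> by_cases ha : a = c <;> by_cases hb : b = c <;>
    simp_all [eq_comm, Nat.odd_iff]

theorem isSwitch_of_colour_eq {n r : ℕ} {φ : Sym2 (Fin n) → Fin r} {u v x y : Fin n}
    (hnodup : [u, v, x, y].Nodup) (hu : φ s(y, u) = φ s(u, v))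
    (hne : φ s(v, x) ≠ φ s(x, y)) : IsSwitch φ u v x y := by
  refine ⟨hnodup, _, _, hne, fun c => ?_⟩
  simpa only [List.map_cons, List.map_nil, hu] using List.odd_count_pair_iff _ hne c

theorem colour_eq_of_forall_not_isSwitch {n r : ℕ} {φ : Sym2 (Fin n) → Fin r} {v₀ : Fin n}
    (hsw : ∀ u v x y : Fin n, ¬IsSwitch φ u v x y) {x y y' : Fin n} (hx : x ≠ v₀)
    (hy : y ≠ v₀) (hy' : y' ≠ v₀) (hyx : y ≠ x) (hy'x : y' ≠ x)
    (hc : φ s(v₀, y) = φ s(v₀, y')) : φ s(x, y) = φ s(x, y') := by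
  rcases eq_or_ne y y' with rfl | hyy'
  · rfl
  by_contra hne
  refine hsw v₀ y x y' (isSwitch_of_colour_eq ?_ (by rw [Sym2.eq_swap, hc]) ?_)
  · simp [hx.symm, hy.symm, hy'.symm, hyx, hy'x.symm, hyy']
  · rwa [Sym2.eq_swap]

/-- If an `r`-edge-colouring `φ` of `K_n` contains no switch and `v₀` is a fixed vertex,
then, writing `V_i = {v ≠ v₀ | φ(v₀v) = i}`, for all (not necessarily distinct) colours
`i, j`, all edges with one endpoint in `V_i` and the other in `V_j` receive the same
colour. -/
theorem switch_free_bipartite_monochromatic (n r : ℕ)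
    (φ : Sym2 (Fin n) → Fin r) (v₀ : Fin n)
    (hsw : ∀ u v x y : Fin n, ¬IsSwitch φ u v x y) :
    ∀ (i j : Fin r) (x y x' y' : Fin n),
      x ≠ v₀ → φ s(v₀, x) = i → y ≠ v₀ → φ s(v₀, y) = j →
      x' ≠ v₀ → φ s(v₀, x') = i → y' ≠ v₀ → φ s(v₀, y') = j →
      x ≠ y → x' ≠ y' → φ s(x, y) = φ s(x', y') := by
  intro i j x y x' y' hx hxi hy hyj hx' hx'i hy' hy'j hxy hx'y'
  rcases eq_or_ne y' x with rfl | hy'x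
  · calc φ s(y', y) = φ s(y', x') :=
          colour_eq_of_forall_not_isSwitch hsw hx hy hx' hxy.symm hx'y'
            (by rw [hyj, hx'i, ← hxi, hy'j])
      _ = φ s(x', y') := by rw [Sym2.eq_swap]
  · calc φ s(x, y) = φ s(x, y') :=
          colour_eq_of_forall_not_isSwitch hsw hx hy hy' hxy.symm hy'x (by rw [hyj, hy'j])
      _ = φ s(y', x) := by rw [Sym2.eq_swap]
      _ = φ s(y', x') :=
          colour_eq_of_forall_not_isSwitch hsw hy' hx hx' hy'x.symm hx'y' (by rw [hxi, hx'i])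
      _ = φ s(x', y') := by rw [Sym2.eq_swap]
end

section
/- Consider the following edge-colouring of the complete graph on vertex set 𝔽₂^t × [m]: the edge between (0,m) and (v,x) gets colour x if x > 1 and colour 0 ∈ 𝔽₂^t if x = 1; every other edge, between (v₁,x₁) and (v₂,x₂), gets colour v₁ + v₂ ∈ 𝔽₂^t. Then every Hamilton cycle in this colouring has some colour appearing an odd number of times on it. -/
open SimpleGraph

/-!
If every colour occurred an even number of times on a Hamilton cycle, any weighting of the
colours by vectors over `𝔽₂` would sum to zero along it. Weight `v ∈ 𝔽₂^t` by `(v, 0)` and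
`x ∈ [m]` by `(0, eₓ)` in `𝔽₂^t × 𝔽₂^m`. An edge `ab` missing the hub `h = (0, m)` then has
weight `(a.1, 0) + (b.1, 0)`, and these potential terms sum to zero around any closed walk.
Only the two cycle edges `ha`, `hb` at the hub remain, and their potential-corrected weights
(`cayleyCol.label`) determine `a` and `b`; so `a = b`, which is impossible in a cycle.
-/

/-- The colouring of the complete graph on `𝔽₂^t × [m]` from the upper-bound construction:
the distinguished vertex is `(0, m)` (here `(0, ⟨m-1⟩)`, with `Fin m` representing
`[m] = {1, …, m}` so that index `0` is the element `1` and index `m-1` is the element `m`);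
the edge between `(0, m)` and `(v, x)` gets colour `x` (i.e. `Sum.inr x`) if `x > 1`, and
colour `0 ∈ 𝔽₂^t` (i.e. `Sum.inl 0`) if `x = 1`; every other edge, between `(v₁, x₁)` and
`(v₂, x₂)`, gets colour `v₁ + v₂ ∈ 𝔽₂^t`. -/
def cayleyCol (m t : ℕ) (hm : 1 ≤ m) (a b : (Fin t → ZMod 2) × Fin m) :
    (Fin t → ZMod 2) ⊕ Fin m :=
  if a = ((0 : Fin t → ZMod 2), (⟨m - 1, by omega⟩ : Fin m)) then
    (if b.2.val = 0 then Sum.inl 0 else Sum.inr b.2)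
  else if b = ((0 : Fin t → ZMod 2), (⟨m - 1, by omega⟩ : Fin m)) then
    (if a.2.val = 0 then Sum.inl 0 else Sum.inr a.2)
  else Sum.inl (a.1 + b.1)

namespace SimpleGraph.Walk

variable {V M : Type*} {G : SimpleGraph V}

lemma IsPath.fst_ne_of_mem_darts {a b : V} {p : G.Walk a b} (hp : p.IsPath) {d : G.Dart}
    (hd : d ∈ p.darts) : d.fst ≠ b := by
  have hnodup := hp.support_nodup
  rw [← p.dropLast_support_concat, List.nodup_append] at hnodup
  exact hnodup.2.2 _ (p.map_fst_darts ▸ List.mem_map_of_mem hd) _ (List.mem_singleton_self b)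

lemma sum_darts_sub [AddCommGroup M] {a b : V} (p : G.Walk a b) (χ : V → M) :
    (p.darts.map fun d => χ d.fst - χ d.snd).sum = χ a - χ b := by
  induction p with
  | nil => simp
  | cons h p ih =>
    rw [darts_cons, List.map_cons, List.sum_cons, ih]
    abel

variable [DecidableEq V] [AddCommMonoid M]

lemma IsCycle.sum_darts_ite_fst {u : V} {c : G.Walk u u} (hc : c.IsCycle) (f : V → M) :
    (c.darts.map fun d => if d.fst = u then f d.snd else 0).sum = f c.snd := by
  cases c with
  | nil => exact (not_isCycle_nil hc).elim
  | cons h p =>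
    have hp := ((cons_isCycle_iff p h).1 hc).1
    rw [darts_cons, List.map_cons, List.sum_cons, if_pos rfl, List.sum_eq_zero, add_zero]
    · simp
    · simp only [List.mem_map]
      rintro _ ⟨d, hd, rfl⟩
      exact if_neg (hp.fst_ne_of_mem_darts hd)

lemma IsCycle.sum_darts_ite {u : V} {c : G.Walk u u} (hc : c.IsCycle) (f : V → M) :
    (c.darts.map fun d => if d.fst = u then f d.snd else if d.snd = u then f d.fst else 0).sum
      = f c.snd + f c.penultimate := by
  have hsplit : ∀ d : G.Dart, (if d.fst = u then f d.snd else if d.snd = u then f d.fst else 0)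
      = (if d.fst = u then f d.snd else 0) + (if d.symm.fst = u then f d.symm.snd else 0) := by
    intro d
    have := d.adj.ne
    simp only [Dart.symm_toProd, Prod.fst_swap, Prod.snd_swap]
    split_ifs <;> simp_all
  have hrev : (c.darts.map fun d => if d.symm.fst = u then f d.symm.snd else 0).sum
      = (c.reverse.darts.map fun d => if d.fst = u then f d.snd else 0).sum := by
    rw [darts_reverse, List.map_reverse, List.sum_reverse, List.map_map]
    rfl
  rw [List.map_congr_left fun d _ => hsplit d, List.sum_map_add, hrev, hc.sum_darts_ite_fst,
    hc.reverse.sum_darts_ite_fst, snd_reverse]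

lemma IsCycle.exists_ne_sum_darts_ite {v u : V} {c : G.Walk v v} (hc : c.IsCycle)
    (hu : u ∈ c.support) (f : V → M) :
    ∃ a b, a ≠ b ∧
      (c.darts.map fun d => if d.fst = u then f d.snd else if d.snd = u then f d.fst else 0).sum
        = f a + f b :=
  ⟨_, _, (hc.rotate hu).snd_ne_penultimate, by
    rw [← ((c.rotate_darts u hu).perm.map _).sum_eq, (hc.rotate hu).sum_darts_ite]⟩

end SimpleGraph.Walk

lemma List.sum_map_eq_zero_of_even_length_filter {α C M : Type*} [DecidableEq C] [AddCommGroup M]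
    [Module (ZMod 2) M] (l : List α) (col : α → C) (f : C → M)
    (h : ∀ c, Even (l.filter fun a => col a = c).length) :
    (l.map fun a => f (col a)).sum = 0 := by
  rw [show (fun a => f (col a)) = f ∘ col from rfl, ← List.map_map, Finset.sum_list_map_count]
  refine Finset.sum_eq_zero fun c _ => ?_
  obtain ⟨k, hk⟩ := h c
  rw [List.count_eq_countP, List.countP_map, List.countP_eq_length_filter]
  change (l.filter fun a => col a = c).length • f c = 0
  rw [hk, add_nsmul, ZModModule.add_self]

namespace cayleyCol

variable {m t : ℕ} (hm : 1 ≤ m)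

def hub : (Fin t → ZMod 2) × Fin m := (0, ⟨m - 1, by omega⟩)

def weight : (Fin t → ZMod 2) ⊕ Fin m → (Fin t → ZMod 2) × (Fin m → ZMod 2) :=
  Sum.elim (fun x => (x, 0)) (fun i => (0, Pi.single i 1))

def label (y : (Fin t → ZMod 2) × Fin m) : (Fin t → ZMod 2) × (Fin m → ZMod 2) :=
  weight (cayleyCol m t hm (hub hm) y) + (y.1, 0)

lemma weight_add (a b : (Fin t → ZMod 2) × Fin m) :
    weight (cayleyCol m t hm a b) + ((a.1, 0) + (b.1, 0))
      = if a = hub hm then label hm b else if b = hub hm then label hm a else 0 := by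
  by_cases ha : a = hub hm
  · subst ha
    simp [label, hub]
  by_cases hb : b = hub hm
  · subst hb
    simp only [hub] at ha
    simp [label, cayleyCol, hub, ha]
  · simp only [hub] at ha hb
    simp [cayleyCol, hub, ha, hb, weight, ZModModule.add_self]

lemma label_injective : Function.Injective (label (t := t) hm) := by
  rintro ⟨v, x⟩ ⟨v', x'⟩ h
  simp only [label, cayleyCol, hub, if_true] at h
  split_ifs at h with hx hx' hx' <;>
    simp only [weight, Sum.elim_inl, Sum.elim_inr, Prod.mk_add_mk, zero_add, add_zero,
      Prod.mk.injEq] at h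
  · exact Prod.ext h.1 (Fin.ext (hx.trans hx'.symm))
  · simpa using congrFun h.2 x'
  · simpa using congrFun h.2 x
  · exact Prod.ext h.1 (by simpa [Pi.single_apply] using congrFun h.2 x)

end cayleyCol

/-- In the colouring `cayleyCol` of the complete graph on `𝔽₂^t × [m]`, every Hamilton cycle
has some colour appearing an odd number of times on it. -/
theorem cayleyCol_odd (m t : ℕ) (hm : 1 ≤ m) :
    ∀ (v : (Fin t → ZMod 2) × Fin m)
      (w : (⊤ : SimpleGraph ((Fin t → ZMod 2) × Fin m)).Walk v v),
      w.IsHamiltonianCycle →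
      ∃ c : (Fin t → ZMod 2) ⊕ Fin m,
        Odd ((w.darts.filter (fun d => cayleyCol m t hm d.fst d.snd = c)).length) := by
  intro v w hw
  by_contra! heven
  simp only [Nat.not_odd_iff_even] at heven
  obtain ⟨a, b, hab, hsum⟩ :=
    hw.isCycle.exists_ne_sum_darts_ite (hw.mem_support (cayleyCol.hub hm))
      (cayleyCol.label hm)
  have hcol := w.darts.sum_map_eq_zero_of_even_length_filter _ cayleyCol.weight heven
  have hpot := w.sum_darts_sub fun y => (y.1, (0 : Fin m → ZMod 2))
  simp only [sub_self, ZModModule.sub_eq_add] at hpot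
  have hlabel : cayleyCol.label hm a + cayleyCol.label hm b = 0 := by
    rw [← hsum, ← List.map_congr_left fun d _ => cayleyCol.weight_add hm d.fst d.snd,
      List.sum_map_add, hcol, hpot, add_zero]
  rw [← ZModModule.sub_eq_add, sub_eq_zero] at hlabel
  exact hab (cayleyCol.label_injective hm hlabel)
end

section
/- Let t ≥ 0, let the vertex set be 𝔽₂^t × [m], and colour each edge between (v₁,x₁) and (v₂,x₂) (both distinct from a distinguished vertex) with v₁ + v₂ ∈ 𝔽₂^t. Then for any path P with endpoints (v₁, x) and (v₂, y) where v₁ ≠ v₂, the sum over the edges of P of their colours equals v₁ + v₂ ≠ 0; in particular the number of edges of P of some colour c ∈ 𝔽₂^t is odd. -/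
open SimpleGraph

namespace SimpleGraph.Walk

variable {V G : Type*} {Γ : SimpleGraph V} [AddCommGroup G] [Module (ZMod 2) G]

/-- Over characteristic two the sum telescopes: each inner vertex of the walk is counted twice. -/
theorem sum_darts_add_eq_of_zmod_two (f : V → G) {u v : V} (p : Γ.Walk u v) :
    (p.darts.map fun d => f d.fst + f d.snd).sum = f u + f v := by
  induction p with
  | nil => simp [ZModModule.add_self]
  | cons _ q ih =>
    simp only [darts_cons, List.map_cons, List.sum_cons, ih]
    exact ZModModule.add_add_add_cancel _ _ _

end SimpleGraph.Walk

theorem List.exists_odd_count_of_sum_ne_zero {G : Type*} [AddCommGroup G] [Module (ZMod 2) G]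
    [DecidableEq G] (l : List G) (h : l.sum ≠ 0) : ∃ c, Odd (l.count c) := by
  by_contra! hcount
  refine h ?_
  rw [Finset.sum_list_count]
  refine Finset.sum_eq_zero fun c _ => ?_
  obtain ⟨k, hk⟩ := Nat.not_odd_iff_even.mp (hcount c)
  rw [hk, add_nsmul, ZModModule.add_self]

/-- On the vertex set `𝔽₂^t × [m]`, colour each edge between `(v₁, x₁)` and `(v₂, x₂)` (both
distinct from the distinguished vertex `(0, m)`) with `v₁ + v₂ ∈ 𝔽₂^t`. Then for any path `P`
avoiding the distinguished vertex with endpoints `(v₁, x)` and `(v₂, y)` where `v₁ ≠ v₂`, the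
sum of the colours over the edges of `P` equals `v₁ + v₂ ≠ 0`; in particular the number of
edges of `P` of some colour `c ∈ 𝔽₂^t` is odd. -/
theorem path_colour_sum (m t : ℕ)
    (v₁ v₂ : Fin t → ZMod 2) (x y : Fin m)
    (p : (⊤ : SimpleGraph ((Fin t → ZMod 2) × Fin m)).Walk (v₁, x) (v₂, y))
    (hne : v₁ ≠ v₂) :
    (p.darts.map (fun d => d.fst.1 + d.snd.1)).sum = v₁ + v₂ ∧
    v₁ + v₂ ≠ 0 ∧
    ∃ c : Fin t → ZMod 2,
      Odd ((p.darts.filter (fun d => d.fst.1 + d.snd.1 = c)).length) := by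
  have hsum : (p.darts.map (fun d => d.fst.1 + d.snd.1)).sum = v₁ + v₂ :=
    p.sum_darts_add_eq_of_zmod_two Prod.fst
  have hnz : v₁ + v₂ ≠ 0 := by
    rwa [← ZModModule.sub_eq_add, sub_ne_zero]
  refine ⟨hsum, hnz, ?_⟩
  obtain ⟨c, hc⟩ := List.exists_odd_count_of_sum_ne_zero _ (hsum ▸ hnz)
  refine ⟨c, ?_⟩
  rwa [List.count, List.countP_map, List.countP_eq_length_filter] at hc
end

section
/- For every even integer n ≥ 4 and every integer 1 ≤ k ≤ n/2, there exists an n-vertex graph G with minimum degree n/2 + k - 1 and a 2k-edge-colouring of G in which every Hamilton cycle has some colour class of odd size. Hence r_odd(n, n/2 + k - 1; C_n) ≤ 2k. -/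
open SimpleGraph

/-- An `r`-edge-colouring `φ` of a graph `G` on `Fin n` is *odd* (for the Hamilton cycle) if
every Hamilton cycle of `G` meets some colour class in an odd number of edges. -/
def IsOddColouringOn {n r : ℕ} (G : SimpleGraph (Fin n)) (φ : Sym2 (Fin n) → Fin r) : Prop :=
  ∀ (v : Fin n) (w : G.Walk v v), w.IsHamiltonianCycle →
    ∃ c : Fin r, Odd ((w.edges.filter (fun e => φ e = c)).length)

/-- The sparse odd-Ramsey number `r_odd(n, δ; C_n)`: the minimum over `n`-vertex graphs `G`
with minimum degree at least `δ` of the least number of colours needed to edge-colour `G` so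
that every Hamilton cycle of `G` has an odd colour class. -/
noncomputable def oddRamseyMinDeg (n δ : ℕ) : ℕ :=
  sInf {r | ∃ G : SimpleGraph (Fin n),
    (∀ v : Fin n, δ ≤ {u | G.Adj v u}.ncard) ∧
    ∃ φ : Sym2 (Fin n) → Fin r, IsOddColouringOn G φ}

/-!
Split `Fin n` into `S = [0, min (2k) (n-1))`, `B` and `A = [n/2 + k, n)`, so that
`|A| = |B| = n/2 - k`, except that `A = ∅` and `B = {n - 1}` when `k = n/2`. Delete the `A`–`B`
edges from the complete graph: every degree is still at least `n/2 + k - 1`. Colour an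
`S`–`B` edge by `s mod 2k`, `s` its endpoint in `S`, and every other edge by `0`.

Walk along a Hamilton cycle from a vertex `x ∉ B` with no cycle-neighbour in `B` (a vertex of
`A`, or any vertex not next to `b` when `B = {b}`). The vertex just before the first visit to
`B` and the one just after the last visit are two distinct vertices of `S`, each joined to `B`
by exactly one cycle edge. Their colours differ, so one of them is some `i ≠ 0`, and the colour
class `i` of the cycle is then a single edge.
-/

theorem Nat.exists_lt_not_and_xor_neighbours {P : ℕ → Prop} {n : ℕ} (h₀ : ¬P 0) (h₁ : ¬P 1)
    (hn₁ : ¬P (n - 1)) (hn : ¬P n) (hP : ∃ j ≤ n, P j) :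
    ∃ p₁ p₂, 0 < p₁ ∧ p₁ < p₂ ∧ p₂ < n ∧
      (¬P p₁ ∧ Xor (P (p₁ - 1)) (P (p₁ + 1))) ∧ (¬P p₂ ∧ Xor (P (p₂ - 1)) (P (p₂ + 1))) := by
  classical
  obtain ⟨j, hjn, hj⟩ := hP
  have hex : ∃ j, P j := ⟨j, hj⟩
  set q := Nat.find hex
  set q' := Nat.findGreatest P n
  have hq : P q := Nat.find_spec hex
  have hq' : P q' := Nat.findGreatest_spec hjn hj
  have hbefore : ∀ i < q, ¬P i := fun i => Nat.find_min hex
  have hafter : ∀ i, q' < i → i ≤ n → ¬P i := fun i => Nat.findGreatest_is_greatest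
  have hqq' : q ≤ q' := Nat.find_min' hex hq'
  have h2q : 2 ≤ q := by
    by_contra! h
    interval_cases q <;> contradiction
  have hq'n : q' + 2 ≤ n := by
    have : q' ≤ n := Nat.findGreatest_le n
    by_contra! h
    obtain h | h : q' = n ∨ q' = n - 1 := by omega
    exacts [hn (h ▸ hq'), hn₁ (h ▸ hq')]
  refine ⟨q - 1, q' + 1, by omega, by omega, by omega, ⟨hbefore _ (by omega), ?_⟩,
    ⟨hafter _ (by omega) (by omega), ?_⟩⟩
  · rw [Nat.sub_add_cancel (by omega : 1 ≤ q)]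
    exact Or.inr ⟨hq, hbefore _ (by omega)⟩
  · rw [Nat.add_sub_cancel]
    exact Or.inl ⟨hq', hafter _ (by omega) (by omega)⟩

theorem List.length_filter_eq_one_of_nodup {α : Type*} {l : List α} (hl : l.Nodup) {a : α}
    (ha : a ∈ l) {p : α → Bool} (hp : ∀ x ∈ l, p x ↔ x = a) : (l.filter p).length = 1 := by
  classical
  rw [← List.count_eq_one_of_mem hl ha, List.count_eq_countP, List.countP_eq_length_filter]
  congr 1
  exact List.filter_congr fun x hx => by rw [Bool.eq_iff_iff, beq_iff_eq]; exact hp x hx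

theorem Fin.ncard_le_of_forall_mem_Ico {n lo hi : ℕ} {s : Set (Fin n)}
    (h : ∀ v ∈ s, lo ≤ (v : ℕ) ∧ (v : ℕ) < hi) : s.ncard ≤ hi - lo :=
  (Set.ncard_le_ncard_of_injOn Fin.val h Fin.val_injective.injOn).trans_eq
    (Set.ncard_Ico_nat lo hi)

namespace SimpleGraph

variable {V : Type*} {G : SimpleGraph V}

namespace Walk

theorem IsCycle.existsUnique_adj_of_xor {x : V} {c : G.Walk x x} (hc : c.IsCycle) {i : ℕ}
    (hi₀ : i ≠ 0) (hi : i < c.length) {B : Set V}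
    (hB : Xor (c.getVert (i - 1) ∈ B) (c.getVert (i + 1) ∈ B)) :
    ∃! b, b ∈ B ∧ c.toSubgraph.Adj (c.getVert i) b := by
  have hN (b : V) : c.toSubgraph.Adj (c.getVert i) b ↔
      b = c.getVert (i - 1) ∨ b = c.getVert (i + 1) := by
    rw [← Subgraph.mem_neighborSet, hc.neighborSet_toSubgraph_internal hi₀ hi]; rfl
  simp only [hN]
  rcases hB with ⟨h, h'⟩ | ⟨h, h'⟩
  · exact ⟨_, ⟨h, .inl rfl⟩, fun b ⟨hb, hb'⟩ => hb'.resolve_right (by rintro rfl; exact h' hb)⟩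
  · exact ⟨_, ⟨h, .inr rfl⟩, fun b ⟨hb, hb'⟩ => hb'.resolve_left (by rintro rfl; exact h' hb)⟩

/-- The vertices just before the first and just after the last visit of `c` to `B` work. -/
theorem IsCycle.exists_ne_existsUnique_adj {x : V} {c : G.Walk x x} (hc : c.IsCycle)
    {B : Set V} (hx : x ∉ B) (hxB : ∀ b ∈ B, ¬c.toSubgraph.Adj x b)
    (hB : ∃ b ∈ B, b ∈ c.support) :
    ∃ s₁ s₂, s₁ ≠ s₂ ∧ (s₁ ∉ B ∧ ∃! b, b ∈ B ∧ c.toSubgraph.Adj s₁ b) ∧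
      (s₂ ∉ B ∧ ∃! b, b ∈ B ∧ c.toSubgraph.Adj s₂ b) := by
  have hlen := hc.three_le_length
  have h₁ : c.getVert 1 ∉ B := fun h => hxB _ h (by
    simpa using c.toSubgraph_adj_getVert (i := 0) (by omega))
  have hn₁ : c.getVert (c.length - 1) ∉ B := fun h => hxB _ h (by
    simpa [Nat.sub_add_cancel (by omega : 1 ≤ c.length)] using
      (c.toSubgraph_adj_getVert (i := c.length - 1) (by omega)).symm)
  have hBc : ∃ j ≤ c.length, c.getVert j ∈ B := by
    obtain ⟨b, hb, hbc⟩ := hB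
    obtain ⟨j, rfl, hj⟩ := c.mem_support_iff_exists_getVert.mp hbc
    exact ⟨j, hj, hb⟩
  obtain ⟨p₁, p₂, hp₁, hp₁₂, hp₂, ⟨hs₁, hx₁⟩, ⟨hs₂, hx₂⟩⟩ :=
    Nat.exists_lt_not_and_xor_neighbours (P := fun j => c.getVert j ∈ B)
      (by simpa using hx) h₁ hn₁ (by simpa using hx) hBc
  refine ⟨c.getVert p₁, c.getVert p₂, fun h => ?_,
    ⟨hs₁, hc.existsUnique_adj_of_xor (by omega) (by omega) hx₁⟩,
    ⟨hs₂, hc.existsUnique_adj_of_xor (by omega) (by omega) hx₂⟩⟩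
  have := hc.getVert_injOn (by simp; omega) (by simp; omega) h
  omega

theorem IsCycle.exists_notMem_forall_not_adj [Fintype V] (hV : 4 ≤ Fintype.card V) {x : V}
    {c : G.Walk x x} (hc : c.IsCycle) {B : Set V} {b : V} (hBb : B ⊆ {b})
    (hb : b ∈ c.support) : ∃ y ∉ B, ∀ b' ∈ B, ¬c.toSubgraph.Adj y b' := by
  have hlt : (insert b (c.toSubgraph.neighborSet b)).ncard < Nat.card V := by
    refine (Set.ncard_insert_le _ _).trans_lt ?_
    rw [hc.ncard_neighborSet_toSubgraph_eq_two hb, Nat.card_eq_fintype_card]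
    omega
  have hne : insert b (c.toSubgraph.neighborSet b) ≠ Set.univ := fun h => by
    rw [h, Set.ncard_univ] at hlt
    exact lt_irrefl _ hlt
  obtain ⟨y, hy⟩ := (Set.ne_univ_iff_exists_notMem _).mp hne
  rw [Set.mem_insert_iff, not_or] at hy
  refine ⟨y, fun hyB => hy.1 (hBb hyB), fun b' hb' hyb' => hy.2 ?_⟩
  rw [hBb hb'] at hyb'
  exact hyb'.symm

theorem IsTrail.length_filter_edges_eq_one {x : V} {c : G.Walk x x} (hc : c.IsTrail)
    {B : Set V} {s : V} (hs : ∃! b, b ∈ B ∧ c.toSubgraph.Adj s b) {p : Sym2 V → Bool}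
    (hp : ∀ e ∈ c.edges, p e ↔ ∃ b ∈ B, e = s(s, b)) : (c.edges.filter p).length = 1 := by
  obtain ⟨b₀, ⟨hb₀, hsb₀⟩, huniq⟩ := hs
  refine List.length_filter_eq_one_of_nodup hc.edges_nodup
    (adj_toSubgraph_iff_mem_edges.mp hsb₀) fun e he => ?_
  rw [hp e he]
  constructor
  · rintro ⟨b, hb, rfl⟩
    rw [huniq b ⟨hb, adj_toSubgraph_iff_mem_edges.mpr he⟩]
  · rintro rfl
    exact ⟨b₀, hb₀, rfl⟩

end Walk

variable {C : Type*}

open Classical in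
noncomputable def crossColouring (B : Set V) (col : V → C) (c₀ : C) : Sym2 V → C :=
  Sym2.lift ⟨fun u v => if u ∈ B ∧ v ∉ B then col v else if v ∈ B ∧ u ∉ B then col u else c₀,
    fun u v => by by_cases hu : u ∈ B <;> by_cases hv : v ∈ B <;> simp [hu, hv]⟩

theorem crossColouring_mk_of_notMem_of_mem {B : Set V} (col : V → C) (c₀ : C) {s b : V}
    (hs : s ∉ B) (hb : b ∈ B) : crossColouring B col c₀ s(s, b) = col s := by
  simp [crossColouring, hs, hb]

theorem crossColouring_eq_iff {A B : Set V} (hAB : ∀ a ∈ A, ∀ b ∈ B, ¬G.Adj a b)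
    {col : V → C} (hcol : Set.InjOn col (A ∪ B)ᶜ) {c₀ : C} {s : V} (hs : s ∉ A ∪ B)
    (hs₀ : col s ≠ c₀) {u v : V} (huv : G.Adj u v) :
    crossColouring B col c₀ s(u, v) = col s ↔ ∃ b ∈ B, s(u, v) = s(s, b) := by
  constructor
  · have hS {w : V} (hwA : w ∉ A) (hwB : w ∉ B) (hw : col w = col s) : w = s :=
      hcol (by simp [hwA, hwB]) (by simpa using hs) hw
    by_cases hu : u ∈ B <;> by_cases hv : v ∈ B <;>
      simp only [crossColouring, Sym2.lift_mk, hu, hv, not_true, not_false_iff, and_true,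
        and_false, if_true, if_false]
    · exact fun h => absurd h.symm hs₀
    · intro h
      obtain rfl := hS (fun hvA => hAB v hvA u hu huv.symm) hv h
      exact ⟨u, hu, Sym2.eq_swap⟩
    · intro h
      obtain rfl := hS (fun huA => hAB u huA v hv huv) hu h
      exact ⟨v, hv, rfl⟩
    · exact fun h => absurd h.symm hs₀
  · rintro ⟨b, hb, he⟩
    rw [he, crossColouring_mk_of_notMem_of_mem col c₀ (fun h => hs (.inr h)) hb]

theorem Walk.IsHamiltonianCycle.exists_length_filter_crossColouring_eq_one [DecidableEq V]
    [DecidableEq C] {A B : Set V} (hAB : ∀ a ∈ A, ∀ b ∈ B, ¬G.Adj a b) {col : V → C}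
    (hcol : Set.InjOn col (A ∪ B)ᶜ) (c₀ : C) {v : V} {w : G.Walk v v}
    (hw : w.IsHamiltonianCycle) (hB : B.Nonempty)
    (hx : ∃ x ∉ B, ∀ b ∈ B, ¬w.toSubgraph.Adj x b) :
    ∃ i, (w.edges.filter (fun e => crossColouring B col c₀ e = i)).length = 1 := by
  obtain ⟨x, hxB, hxadj⟩ := hx
  obtain ⟨b, hb⟩ := hB
  set c := w.rotate x (hw.mem_support x)
  have hc : c.IsCycle := hw.isCycle.rotate _
  obtain ⟨s₁, s₂, hne, h₁, h₂⟩ := hc.exists_ne_existsUnique_adj hxB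
    (by simpa only [c, toSubgraph_rotate] using hxadj) ⟨b, hb, (hw.rotate _).mem_support b⟩
  have hS {s : V} (hs : s ∉ B ∧ ∃! b, b ∈ B ∧ c.toSubgraph.Adj s b) : s ∉ A ∪ B := by
    obtain ⟨hsB, b, ⟨hb, hsb⟩, -⟩ := hs
    rintro (hsA | hsB')
    · exact hAB s hsA b hb (c.toSubgraph.adj_sub hsb)
    · exact hsB hsB'
  have hsingle {s : V} (hs : s ∉ B ∧ ∃! b, b ∈ B ∧ c.toSubgraph.Adj s b) (hs₀ : col s ≠ c₀) :
      ∃ i, (w.edges.filter (fun e => crossColouring B col c₀ e = i)).length = 1 := by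
    refine ⟨col s, ?_⟩
    rw [((w.rotate_edges x (hw.mem_support x)).perm.filter _).length_eq.symm]
    refine hc.isTrail.length_filter_edges_eq_one hs.2 fun e he => ?_
    induction e using Sym2.ind with
    | h u u' =>
      simpa using crossColouring_eq_iff hAB hcol (hS hs) hs₀ (c.edges_subset_edgeSet he)
  by_cases h₀ : col s₁ = c₀
  · exact hsingle h₂ fun h => hne (hcol (hS h₁) (hS h₂) (h₀.trans h.symm))
  · exact hsingle h₁ h₀

theorem le_ncard_adj_of_forall_adj [Fintype V] (v : V) (X : Set V)
    (h : ∀ u, u ≠ v → u ∉ X → G.Adj v u) :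
    Fintype.card V - 1 - X.ncard ≤ {u | G.Adj v u}.ncard := by
  have hsub : {u | G.Adj v u}ᶜ ⊆ insert v X := fun u hu => by
    by_contra h'
    rw [Set.mem_insert_iff, not_or] at h'
    exact hu (h u h'.1 h'.2)
  have := (Set.ncard_le_ncard hsub).trans (Set.ncard_insert_le v X)
  have := Set.ncard_add_ncard_compl {u | G.Adj v u}
  rw [Nat.card_eq_fintype_card] at this
  omega

def completeExceptBetween (A B : Set V) : SimpleGraph V :=
  ⊤ \ fromRel fun a b => a ∈ A ∧ b ∈ B

variable {A B : Set V}

theorem completeExceptBetween_adj {u v : V} :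
    (completeExceptBetween A B).Adj u v ↔ u ≠ v ∧ ¬(u ∈ A ∧ v ∈ B) ∧ ¬(v ∈ A ∧ u ∈ B) := by
  simp only [completeExceptBetween, sdiff_adj, top_adj, fromRel_adj]
  tauto

theorem le_ncard_completeExceptBetween_adj_of_notMem_left [Fintype V] {v : V} (hv : v ∉ A) :
    Fintype.card V - 1 - A.ncard ≤ {u | (completeExceptBetween A B).Adj v u}.ncard :=
  le_ncard_adj_of_forall_adj v A fun _ huv hu => completeExceptBetween_adj.mpr
    ⟨huv.symm, fun h => hv h.1, fun h => hu h.1⟩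

theorem le_ncard_completeExceptBetween_adj_of_notMem_right [Fintype V] {v : V} (hv : v ∉ B) :
    Fintype.card V - 1 - B.ncard ≤ {u | (completeExceptBetween A B).Adj v u}.ncard :=
  le_ncard_adj_of_forall_adj v B fun _ huv hu => completeExceptBetween_adj.mpr
    ⟨huv.symm, fun h => hu h.2, fun h => hv h.2⟩

end SimpleGraph

namespace OddRamsey

variable (n k : ℕ)

def partA : Set (Fin n) := {v | n / 2 + k ≤ v}

def partB : Set (Fin n) := {v | min (2 * k) (n - 1) ≤ v ∧ v < n / 2 + k}

def graph : SimpleGraph (Fin n) := completeExceptBetween (partA n k) (partB n k)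

def vertexColour (hk : 0 < k) (v : Fin n) : Fin (2 * k) := ⟨v % (2 * k), Nat.mod_lt _ (by omega)⟩

noncomputable def colouring (hk : 0 < k) : Sym2 (Fin n) → Fin (2 * k) :=
  crossColouring (partB n k) (vertexColour n k hk) ⟨0, by omega⟩

variable {n k}

theorem le_ncard_graph_adj (he : Even n) (hkn : k ≤ n / 2) (v : Fin n) :
    n / 2 + k - 1 ≤ {u | (graph n k).Adj v u}.ncard := by
  have hn2 : n / 2 * 2 = n := Nat.div_mul_cancel he.two_dvd
  have hv := v.isLt
  by_cases hvA : v ∈ partA n k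
  · have hB : (partB n k).ncard ≤ n / 2 + k - min (2 * k) (n - 1) :=
      Fin.ncard_le_of_forall_mem_Ico fun _ h => h
    have hvB : v ∉ partB n k := fun h => by
      simp only [partA, partB, Set.mem_ofPred_eq] at hvA h
      omega
    have := le_ncard_completeExceptBetween_adj_of_notMem_right (A := partA n k) hvB
    simp only [partA, Set.mem_ofPred_eq, Fintype.card_fin] at hvA this
    exact le_trans (by omega) this
  · have hA : (partA n k).ncard ≤ n - (n / 2 + k) :=
      Fin.ncard_le_of_forall_mem_Ico fun w h => ⟨h, w.isLt⟩
    have := le_ncard_completeExceptBetween_adj_of_notMem_left (B := partB n k) hvA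
    rw [Fintype.card_fin] at this
    exact le_trans (by omega) this

theorem not_graph_adj {a b : Fin n} (ha : a ∈ partA n k) (hb : b ∈ partB n k) :
    ¬(graph n k).Adj a b :=
  fun h => (completeExceptBetween_adj.mp h).2.1 ⟨ha, hb⟩

theorem injOn_vertexColour (hk : 0 < k) :
    Set.InjOn (vertexColour n k hk) (partA n k ∪ partB n k)ᶜ :=
  fun u hu u' hu' h => by
    simp only [partA, partB, vertexColour, Set.mem_compl_iff, Set.mem_union, Set.mem_ofPred_eq,
      Fin.mk.injEq] at hu hu' h
    rw [Nat.mod_eq_of_lt (by omega), Nat.mod_eq_of_lt (by omega)] at h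
    exact Fin.ext h

theorem exists_notMem_partB_forall_not_adj (hn : 4 ≤ n) {v : Fin n} {w : (graph n k).Walk v v}
    (hw : w.IsHamiltonianCycle) : ∃ x ∉ partB n k, ∀ b ∈ partB n k, ¬w.toSubgraph.Adj x b := by
  by_cases hk : k < n / 2
  · have hA : (⟨n - 1, by omega⟩ : Fin n) ∈ partA n k := by
      simp only [partA, Set.mem_ofPred_eq]
      omega
    refine ⟨_, fun hB => ?_, fun b hb h => not_graph_adj hA hb (w.toSubgraph.adj_sub h)⟩
    simp only [partA, partB, Set.mem_ofPred_eq] at hA hB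
    omega
  · have hB : partB n k ⊆ {⟨n - 1, by omega⟩} := fun u hu => by
      simp only [partB, Set.mem_ofPred_eq] at hu
      exact Fin.ext (by simp; omega)
    exact hw.isCycle.exists_notMem_forall_not_adj (by simpa using hn) hB (hw.mem_support _)

theorem isOddColouringOn (hn : 4 ≤ n) (he : Even n) (hk : 0 < k) (hkn : k ≤ n / 2) :
    IsOddColouringOn (graph n k) (colouring n k hk) := by
  intro v w hw
  have hn2 : n / 2 * 2 = n := Nat.div_mul_cancel he.two_dvd
  have hB : (⟨n / 2 + k - 1, by omega⟩ : Fin n) ∈ partB n k := by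
    simp only [partB, Set.mem_ofPred_eq]
    omega
  obtain ⟨i, hi⟩ := hw.exists_length_filter_crossColouring_eq_one
    (fun _ ha _ hb => not_graph_adj ha hb) (injOn_vertexColour hk) _ ⟨_, hB⟩
    (exists_notMem_partB_forall_not_adj hn hw)
  exact ⟨i, hi ▸ odd_one⟩

end OddRamsey

/-- For every even `n ≥ 4` and `1 ≤ k ≤ n/2` there is an `n`-vertex graph of minimum degree
at least `n/2 + k - 1` together with a `2k`-edge-colouring in which every Hamilton cycle has
an odd colour class; hence `r_odd(n, n/2 + k - 1; C_n) ≤ 2k`. -/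
theorem oddRamseyMinDeg_le (n k : ℕ) (hn : 4 ≤ n) (he : Even n)
    (hk1 : 1 ≤ k) (hk2 : k ≤ n / 2) :
    (∃ (G : SimpleGraph (Fin n)) (φ : Sym2 (Fin n) → Fin (2 * k)),
      (∀ v : Fin n, n / 2 + k - 1 ≤ {u | G.Adj v u}.ncard) ∧ IsOddColouringOn G φ) ∧
    oddRamseyMinDeg n (n / 2 + k - 1) ≤ 2 * k := by
  have hdeg := OddRamsey.le_ncard_graph_adj he hk2
  have hodd := OddRamsey.isOddColouringOn hn he hk1 hk2
  exact ⟨⟨_, _, hdeg, hodd⟩, Nat.sInf_le ⟨_, hdeg, _, hodd⟩⟩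
end

section
/- Let n ≥ 4 be even, let G be an n-vertex graph with minimum degree δ(G) ≥ n/2 + 2, and suppose the edges of G are 2-coloured. If G contains a 4-cycle on which both colours appear an odd number of times, then G contains a Hamilton cycle on which both colour classes have even size. -/
/-!
Let `x₁x₂x₃x₄` be the odd-coloured 4-cycle. Deleting `x₂` and `x₃` leaves a graph on `n - 2`
vertices of minimum degree at least `n/2`, which is Hamilton-connected (Ore), so it has a
Hamilton path `x₁ … x₄`. Since `x₂` and `x₃` each have more than `n/2` neighbours on this
path, some edge `uw` of the path has `u ~ x₃` and `w ~ x₂`. This gives two Hamilton cycles of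
`G`, `x₁ … u x₃ x₂ w … x₄ x₁` and `x₁ … u x₃ x₄ … w x₂ x₁`, whose edge sets differ exactly by
exchanging the opposite edge pairs `{x₂x₃, x₄x₁}` and `{x₁x₂, x₃x₄}` of the 4-cycle. The
4-cycle has an odd number of red edges, so exactly one of the two Hamilton cycles has an even
number of red edges, and then, `n` being even, also an even number of blue edges.

Hamilton-connectedness is proved on vertex orderings: among the orderings from `a` to `b`
take one with the fewest non-adjacent consecutive pairs; if `xy` is such a pair, counting
shows that some consecutive pair `cd` has `x ~ c` and `y ~ d`, and reversing the segment
between them (a Pósa rotation) removes the gap.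
-/

open scoped List

theorem List.exists_append_cons_cons_of_length_lt {α : Type*} {P Q : α → Prop}
    [DecidablePred P] [DecidablePred Q] :
    ∀ {l : List α}, l.length < l.countP P + l.tail.countP Q →
      ∃ A x y B, l = A ++ x :: y :: B ∧ P x ∧ Q y
  | [] => by simp
  | [x] => fun h => by
    rw [List.countP_singleton, List.tail_cons, List.countP_nil, List.length_singleton] at h
    split at h <;> omega
  | x :: y :: t => fun h => by
    by_cases hxy : P x ∧ Q y
    · exact ⟨[], x, y, t, rfl, hxy⟩
    have hxy' : (if P x then 1 else 0) + (if Q y then 1 else 0) ≤ 1 := by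
      split_ifs <;> simp_all
    have ih : (y :: t).length < (y :: t).countP P + t.countP Q := by
      simp only [List.countP_cons, List.length_cons, List.tail_cons, decide_eq_true_eq] at h ⊢
      omega
    obtain ⟨A, u, v, B, hyt, hu, hv⟩ := exists_append_cons_cons_of_length_lt ih
    exact ⟨x :: A, u, v, B, by rw [hyt]; rfl, hu, hv⟩

theorem List.Nodup.length_eq_card {α : Type*} [Fintype α] {l : List α} (hl : l.Nodup)
    (hmem : ∀ a, a ∈ l) : l.length = Fintype.card α := by
  classical
  rw [← List.toFinset_card_of_nodup hl,
    Finset.eq_univ_of_forall (fun a => List.mem_toFinset.2 (hmem a)), Finset.card_univ]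

theorem List.even_or_even_countP_of_perm {α : Type*} (p : α → Bool) {L₁ L₂ : List α}
    {e₁ e₂ e₃ e₄ : α} (h : L₁ ++ [e₁, e₃] ~ L₂ ++ [e₂, e₄])
    (hodd : Odd ([e₁, e₂, e₃, e₄].countP p)) : Even (L₁.countP p) ∨ Even (L₂.countP p) := by
  have hcount := h.countP_eq p
  simp only [List.countP_append, List.countP_cons, List.countP_nil] at hcount hodd
  simp only [Nat.even_iff, Nat.odd_iff] at hodd ⊢
  split_ifs at hcount hodd <;> omega

theorem List.even_length_filter_eq {α : Type*} (f : α → Bool) {L : List α} (hL : Even L.length)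
    (h : Even (L.countP f)) (c : Bool) : Even (L.filter (fun a => f a = c)).length := by
  have hsplit := L.length_eq_countP_add_countP f
  cases c
  · simp only [← List.countP_eq_length_filter, Bool.not_eq_true] at hsplit ⊢
    simp only [Nat.even_iff] at hL h ⊢
    omega
  · simpa [← List.countP_eq_length_filter] using h

namespace SimpleGraph

variable {V : Type*}

section

variable (G : SimpleGraph V) [DecidableRel G.Adj]

def numGaps : List V → ℕ
  | x :: y :: l => (if G.Adj x y then 0 else 1) + numGaps (y :: l)
  | _ => 0

variable {G}

theorem numGaps_cons_cons (x y : V) (l : List V) :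
    G.numGaps (x :: y :: l) = (if G.Adj x y then 0 else 1) + G.numGaps (y :: l) := rfl

theorem numGaps_append_cons (l₁ : List V) (x : V) (l₂ : List V) :
    G.numGaps (l₁ ++ x :: l₂) = G.numGaps (l₁ ++ [x]) + G.numGaps (x :: l₂) := by
  induction l₁ with
  | nil => simp [numGaps]
  | cons y l₁ ih =>
    cases l₁ with
    | nil => simp [numGaps_cons_cons, numGaps]
    | cons z l₁ =>
      simp only [List.cons_append, numGaps_cons_cons] at ih ⊢
      rw [ih, Nat.add_assoc]

theorem numGaps_reverse (l : List V) : G.numGaps l.reverse = G.numGaps l := by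
  induction l with
  | nil => rfl
  | cons x t ih =>
    cases t with
    | nil => rfl
    | cons y t =>
      rw [List.reverse_cons, List.reverse_cons, List.append_assoc, List.singleton_append,
        numGaps_append_cons, ← List.reverse_cons, ih, numGaps_cons_cons, numGaps_cons_cons]
      simp [numGaps, G.adj_comm, Nat.add_comm]

theorem numGaps_reverse_infix_lt {a b c d : V} (A M B : List V)
    (hab : ¬ G.Adj a b) (hac : G.Adj a c) (hbd : G.Adj b d) :
    G.numGaps (A ++ a :: c :: (M.reverse ++ b :: d :: B))
      < G.numGaps (A ++ a :: b :: (M ++ c :: d :: B)) := by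
  have split (x y z w : V) (S : List V) : G.numGaps (x :: y :: (S ++ z :: w :: B)) =
      (if G.Adj x y then 0 else 1) + G.numGaps (y :: S ++ [z]) + (if G.Adj z w then 0 else 1)
        + G.numGaps (w :: B) := by
    rw [numGaps_cons_cons, ← List.cons_append, numGaps_append_cons, numGaps_cons_cons]
    omega
  have hmid : G.numGaps (c :: M.reverse ++ [b]) = G.numGaps (b :: M ++ [c]) := by
    rw [← numGaps_reverse (b :: M ++ [c])]
    simp
  rw [numGaps_append_cons A a (c :: _), numGaps_append_cons A a (b :: _), split, split, hmid]
  simp only [if_pos hac, if_pos hbd, if_neg hab]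
  omega

theorem exists_perm_numGaps_lt_of_split_right {x y c d : V} {A B C D : List V}
    (hxy : ¬ G.Adj x y) (hsplit : y :: B = C ++ c :: d :: D) (hxc : G.Adj x c)
    (hyd : G.Adj y d) :
    ∃ l', l' ~ A ++ x :: y :: B ∧ l'.head? = (A ++ x :: y :: B).head? ∧
      l'.getLast? = (A ++ x :: y :: B).getLast? ∧
      G.numGaps l' < G.numGaps (A ++ x :: y :: B) := by
  obtain _ | ⟨z, M⟩ := C
  · obtain ⟨rfl, -⟩ := List.cons_eq_cons.1 hsplit
    exact absurd hxc hxy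
  · obtain ⟨rfl, rfl⟩ := List.cons_eq_cons.1 hsplit
    refine ⟨A ++ x :: c :: (M.reverse ++ y :: d :: D), ?_, by simp,
      by simp [List.getLast?_cons, List.getLast?_append],
      numGaps_reverse_infix_lt A M D hxy hxc hyd⟩
    simpa using (((List.reverse_perm (y :: M ++ [c])).append_right (d :: D)).cons x).append_left A

theorem exists_perm_numGaps_lt {x y : V} {A B : List V} (hxy : ¬ G.Adj x y)
    (hdeg : (A ++ x :: y :: B).length
      < (A ++ x :: y :: B).countP (G.Adj x) + (A ++ x :: y :: B).countP (G.Adj y)) :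
    ∃ l', l' ~ A ++ x :: y :: B ∧ l'.head? = (A ++ x :: y :: B).head? ∧
      l'.getLast? = (A ++ x :: y :: B).getLast? ∧
      G.numGaps l' < G.numGaps (A ++ x :: y :: B) := by
  by_cases hright : (y :: B).length < (y :: B).countP (G.Adj x) + B.countP (G.Adj y)
  · obtain ⟨C, c, d, D, hsplit, hxc, hyd⟩ := List.exists_append_cons_cons_of_length_lt hright
    exact exists_perm_numGaps_lt_of_split_right hxy hsplit hxc hyd
  -- Otherwise the counting succeeds before the gap, and the first case applies to the reverse.
  have hleft : (x :: A.reverse).length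
      < (x :: A.reverse).countP (G.Adj y) + A.reverse.countP (G.Adj x) := by
    simp only [List.countP_append, List.countP_cons, List.length_append, List.length_cons,
      List.length_reverse, List.countP_reverse, SimpleGraph.irrefl, decide_false,
      G.adj_comm y x, hxy, Bool.false_eq_true, if_false, add_zero] at hdeg hright ⊢
    omega
  obtain ⟨C, c, d, D, hsplit, hyc, hxd⟩ := List.exists_append_cons_cons_of_length_lt hleft
  obtain ⟨l', hperm, hhead, hlast, hlt⟩ :=
    exists_perm_numGaps_lt_of_split_right (A := B.reverse) (fun h => hxy h.symm) hsplit hyc hxd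
  have hrev : B.reverse ++ y :: x :: A.reverse = (A ++ x :: y :: B).reverse := by simp
  rw [hrev] at hperm hhead hlast hlt
  refine ⟨l'.reverse, (List.reverse_perm _).trans (hperm.trans (List.reverse_perm _)), ?_, ?_, ?_⟩
  · rw [List.head?_reverse, hlast, List.getLast?_reverse]
  · rw [List.getLast?_reverse, hhead, List.head?_reverse]
  · rwa [numGaps_reverse] at hlt ⊢

theorem exists_perm_isChain_adj [DecidableEq V] {K : List V}
    (hK : ∀ v ∈ K, K.length < 2 * K.countP (G.Adj v)) {a b : V} (ha : a ∈ K) (hb : b ∈ K)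
    (hab : a ≠ b) : ∃ l, l ~ K ∧ l.IsChain G.Adj ∧ l.head? = some a ∧ l.getLast? = some b := by
  let S := {l : List V | l ~ K ∧ l.head? = some a ∧ l.getLast? = some b}
  have hS : S.Nonempty := by
    refine ⟨a :: ((K.erase a).erase b ++ [b]), List.Perm.symm ?_, rfl,
      by simp [List.getLast?_cons]⟩
    have hb' : b ∈ K.erase a := (List.mem_erase_of_ne hab.symm).2 hb
    calc K ~ a :: K.erase a := List.perm_cons_erase ha
      _ ~ a :: b :: (K.erase a).erase b := (List.perm_cons_erase hb').cons a
      _ ~ a :: ((K.erase a).erase b ++ [b]) := (List.perm_append_singleton _ _).symm.cons a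
  obtain ⟨l, ⟨hlK, hla, hlb⟩, hmin⟩ := (InvImage.wf G.numGaps wellFounded_lt).has_min S hS
  refine ⟨l, hlK, ?_, hla, hlb⟩
  by_contra hchain
  obtain ⟨x, y, A, B, rfl, hxy⟩ : ∃ x y A B, l = A ++ x :: y :: B ∧ ¬ G.Adj x y := by
    simpa [List.isChain_iff_forall_rel_of_append_cons_cons] using hchain
  have hx := hK x (hlK.subset (by simp))
  have hy := hK y (hlK.subset (by simp))
  obtain ⟨l', hperm, hhead, hlast, hlt⟩ := exists_perm_numGaps_lt hxy (by
    rw [hlK.countP_eq, hlK.countP_eq, hlK.length_eq]; omega)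
  exact hmin l' ⟨hperm.trans hlK, hhead.trans hla, hlast.trans hlb⟩ hlt

theorem countP_adj_eq_degree [Fintype V] {l : List V} (hl : l.Nodup) (hmem : ∀ v, v ∈ l)
    (v : V) : l.countP (G.Adj v) = G.degree v := by
  have huniv : (Finset.univ : Finset V).val = l := congrArg Finset.val
    (Finset.eq_univ_of_forall (s := ⟨(l : Multiset V), Multiset.coe_nodup.2 hl⟩) hmem).symm
  rw [← card_neighborFinset_eq_degree, neighborFinset_eq_filter, Finset.card_def,
    Finset.filter_val, ← Multiset.countP_eq_card_filter, huniv, Multiset.coe_countP]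

end

variable {G : SimpleGraph V}

theorem Walk.exists_support_eq {l : List V} (hl : l.IsChain G.Adj) {a b : V}
    (ha : l.head? = some a) (hb : l.getLast? = some b) : ∃ p : G.Walk a b, p.support = l := by
  have hne : l ≠ [] := by rintro rfl; simp at ha
  rw [List.head?_eq_some_head hne, Option.some_inj] at ha
  rw [List.getLast?_eq_some_getLast hne, Option.some_inj] at hb
  exact ⟨(Walk.ofSupport l hne hl).copy ha hb, by simp⟩

theorem Walk.isHamiltonian_of_perm [DecidableEq V] {a b : V} {p : G.Walk a b} {K : List V}
    (hp : p.support ~ K) (hK : K.Nodup) (hmem : ∀ v, v ∈ K) : p.IsHamiltonian :=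
  fun v => (hp.count_eq v).trans (List.count_eq_one_of_mem hK (hmem v))

theorem Walk.IsHamiltonian.isHamiltonianCycle_cons [DecidableEq V] {u v : V} {p : G.Walk v u}
    (hp : p.IsHamiltonian) (h : G.Adj u v) (hlen : p.length ≠ 1) :
    (Walk.cons h p).IsHamiltonianCycle where
  toIsCycle := (cons_isCycle_iff p h).2 ⟨hp.isPath, fun he =>
    hlen (hp.isPath.length_eq_one_of_mem_edges (Sym2.eq_swap ▸ he))⟩
  isHamiltonian_tail := fun a => by simpa using hp a

theorem Walk.IsCycle.exists_of_length_eq_four {v : V} {w : G.Walk v v} (hw : w.IsCycle)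
    (h4 : w.length = 4) : ∃ (x₂ x₃ x₄ : V) (_ : G.Adj v x₂) (_ : G.Adj x₂ x₃) (_ : G.Adj x₃ x₄)
      (_ : G.Adj x₄ v), v ≠ x₃ ∧ x₂ ≠ x₄ ∧
      w.edges = [s(v, x₂), s(x₂, x₃), s(x₃, x₄), s(x₄, v)] := by
  obtain _ | ⟨h₁₂, _ | ⟨h₂₃, _ | ⟨h₃₄, _ | ⟨h₄₁, _ | ⟨_, _⟩⟩⟩⟩⟩ := w <;> simp at h4
  have hnd := (Walk.isCycle_def _).1 hw |>.2.2
  simp only [support_cons, support_nil, List.tail_cons, List.nodup_cons, List.mem_cons] at hnd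
  exact ⟨_, _, _, h₁₂, h₂₃, h₃₄, h₄₁, by tauto, by tauto, by simp⟩

variable [Fintype V] [DecidableEq V] [DecidableRel G.Adj]

theorem exists_isChain_of_two_removed (hδ : Fintype.card V + 2 < 2 * G.minDegree)
    {y z a b : V} (hyz : y ≠ z) (ha : a ≠ y ∧ a ≠ z) (hb : b ≠ y ∧ b ≠ z) (hab : a ≠ b) :
    ∃ l, (y :: z :: l).Nodup ∧ (∀ v, v ∈ y :: z :: l) ∧ l.IsChain G.Adj ∧
      l.head? = some a ∧ l.getLast? = some b := by
  set K := ((Finset.univ.erase y).erase z).toList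
  have hnd : (y :: z :: K).Nodup := by simp [K, hyz, Finset.nodup_toList]
  have hmem : ∀ v, v ∈ y :: z :: K := by
    intro v
    simp only [List.mem_cons, Finset.mem_toList, Finset.mem_erase, Finset.mem_univ, and_true, K]
    tauto
  have hlen : K.length + 2 = Fintype.card V := hnd.length_eq_card hmem
  have hdeg : ∀ v, G.degree v ≤ K.countP (G.Adj v) + 2 := by
    intro v
    rw [← countP_adj_eq_degree hnd hmem v, List.countP_cons, List.countP_cons]
    split_ifs <;> omega
  obtain ⟨l, hlK, hchain, hhead, hlast⟩ := exists_perm_isChain_adj (G := G) (K := K) (a := a)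
    (b := b) (fun v _ => by have := hdeg v; have := G.minDegree_le_degree v; omega)
    (by simp [K, ha.1, ha.2]) (by simp [K, hb.1, hb.2]) hab
  have hperm : y :: z :: l ~ y :: z :: K := (hlK.cons z).cons y
  exact ⟨l, hperm.nodup_iff.2 hnd, fun v => hperm.mem_iff.2 (hmem v), hchain, hhead, hlast⟩

theorem exists_isHamiltonianCycle_swap (hδ : Fintype.card V + 2 < 2 * G.minDegree)
    {x₁ x₂ x₃ x₄ : V} (h₁₂ : G.Adj x₁ x₂) (h₂₃ : G.Adj x₂ x₃) (h₃₄ : G.Adj x₃ x₄)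
    (h₄₁ : G.Adj x₄ x₁) (h₁₃ : x₁ ≠ x₃) (h₂₄ : x₂ ≠ x₄) :
    ∃ (a : V) (C₁ : G.Walk a a) (b : V) (C₂ : G.Walk b b), C₁.IsHamiltonianCycle ∧
      C₂.IsHamiltonianCycle ∧
      C₁.edges ++ [s(x₁, x₂), s(x₃, x₄)] ~ C₂.edges ++ [s(x₂, x₃), s(x₄, x₁)] := by
  obtain ⟨l, hnd, hmem, hchain, hhead, hlast⟩ := exists_isChain_of_two_removed hδ h₂₃.ne
    ⟨h₁₂.ne, h₁₃⟩ ⟨h₂₄.symm, h₃₄.ne.symm⟩ h₄₁.ne.symm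
  have hlen := hnd.length_eq_card hmem
  have hdeg₂ := G.countP_adj_eq_degree hnd hmem x₂
  have hdeg₃ := G.countP_adj_eq_degree hnd hmem x₃
  have htail : l.countP (G.Adj x₂) ≤ l.tail.countP (G.Adj x₂) + 1 := by
    cases l with
    | nil => simp
    | cons v t => simp only [List.countP_cons, List.tail_cons]; split <;> omega
  obtain ⟨T, u, w, D, rfl, h₃u, h₂w⟩ := List.exists_append_cons_cons_of_length_lt
    (l := l) (P := G.Adj x₃) (Q := G.Adj x₂) (by
      have := G.minDegree_le_degree x₂
      have := G.minDegree_le_degree x₃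
      simp only [List.countP_cons_of_pos, List.countP_cons_of_neg, SimpleGraph.irrefl,
        h₂₃, h₂₃.symm, decide_true, decide_false, Bool.false_eq_true, not_false_eq_true,
        List.length_cons] at hdeg₂ hdeg₃ hlen
      omega)
  rw [List.isChain_append_cons_cons] at hchain
  obtain ⟨pT, hpT⟩ := Walk.exists_support_eq hchain.1 (a := x₁) (b := u)
    (by cases T <;> simpa using hhead) (by simp)
  obtain ⟨pD, hpD⟩ := Walk.exists_support_eq hchain.2.2 (a := w) (b := x₄) rfl
    (by simpa [List.getLast?_append, List.getLast?_cons] using hlast)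
  let q₁ := pT.append (.cons h₃u.symm (.cons h₂₃.symm (.cons h₂w pD)))
  let q₂ := pT.append (.cons h₃u.symm (.cons h₃₄ (pD.reverse.append (.cons h₂w.symm .nil))))
  have hq₁ : q₁.IsHamiltonian := Walk.isHamiltonian_of_perm (by
    simp only [q₁, Walk.support_append, Walk.support_cons, hpT, hpD, List.tail_cons]
    rw [List.perm_iff_count]
    intro v
    simp only [List.count_append, List.count_cons, List.count_nil]
    omega) hnd hmem
  have hq₂ : q₂.IsHamiltonian := Walk.isHamiltonian_of_perm (by
    simp only [q₂, Walk.support_append, Walk.support_cons, Walk.support_reverse,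
      Walk.support_nil, hpT, hpD, List.tail_cons]
    rw [List.perm_iff_count]
    intro v
    simp only [List.count_append, List.count_cons, List.count_reverse, List.count_nil]
    omega) hnd hmem
  refine ⟨x₄, .cons h₄₁ q₁, x₂, .cons h₁₂.symm q₂, hq₁.isHamiltonianCycle_cons h₄₁ ?_,
    hq₂.isHamiltonianCycle_cons h₁₂.symm ?_, ?_⟩
  · simp only [q₁, Walk.length_append, Walk.length_cons]
    omega
  · simp only [q₂, Walk.length_append, Walk.length_cons]
    omega
  simp only [q₁, q₂, Walk.edges_cons, Walk.edges_append, Walk.edges_reverse, Walk.edges_nil]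
  rw [List.perm_iff_count]
  intro e
  simp only [List.count_append, List.count_cons, List.count_reverse, List.count_nil, Sym2.eq_swap]
  omega

end SimpleGraph

open SimpleGraph

theorem even_hamilton_of_odd_C4_general {V : Type*} [Fintype V] [DecidableEq V]
    (G : SimpleGraph V) [DecidableRel G.Adj]
    (he : Even (Fintype.card V))
    (hδ : Fintype.card V / 2 + 2 ≤ G.minDegree)
    (φ : Sym2 V → Bool)
    (hodd : ∃ (v : V) (w : G.Walk v v), w.IsCycle ∧ w.length = 4 ∧
      ∀ c : Bool, Odd ((w.edges.filter (fun e => φ e = c)).length)) :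
    ∃ (v : V) (w : G.Walk v v), w.IsHamiltonianCycle ∧
      ∀ c : Bool, Even ((w.edges.filter (fun e => φ e = c)).length) := by
  obtain ⟨x₁, w, hw, hw4, hcol⟩ := hodd
  obtain ⟨x₂, x₃, x₄, h₁₂, h₂₃, h₃₄, h₄₁, h₁₃, h₂₄, hedges⟩ := hw.exists_of_length_eq_four hw4
  obtain ⟨a, C₁, b, C₂, hC₁, hC₂, hswap⟩ :=
    exists_isHamiltonianCycle_swap (by omega) h₁₂ h₂₃ h₃₄ h₄₁ h₁₃ h₂₄
  have hodd₄ : Odd ([s(x₁, x₂), s(x₂, x₃), s(x₃, x₄), s(x₄, x₁)].countP φ) := by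
    simpa [hedges, List.countP_eq_length_filter] using hcol true
  have hlen {u : V} {C : G.Walk u u} (hC : C.IsHamiltonianCycle) : Even C.edges.length := by
    rwa [Walk.length_edges, hC.length_eq]
  rcases List.even_or_even_countP_of_perm φ hswap hodd₄ with h | h
  · exact ⟨a, C₁, hC₁, List.even_length_filter_eq φ (hlen hC₁) h⟩
  · exact ⟨b, C₂, hC₂, List.even_length_filter_eq φ (hlen hC₂) h⟩

/-- Let `n ≥ 4` be even and let `G` be an `n`-vertex graph with minimum degree at least
`n/2 + 2` whose edges are 2-coloured. If `G` contains a 4-cycle on which both colours appear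
an odd number of times, then `G` contains a Hamilton cycle on which both colour classes have
even size. -/
theorem even_hamilton_of_odd_C4 {V : Type*} [Fintype V] [DecidableEq V]
    (G : SimpleGraph V) [DecidableRel G.Adj]
    (hn : 4 ≤ Fintype.card V) (he : Even (Fintype.card V))
    (hδ : Fintype.card V / 2 + 2 ≤ G.minDegree)
    (φ : Sym2 V → Bool)
    (hodd : ∃ (v : V) (w : G.Walk v v), w.IsCycle ∧ w.length = 4 ∧
      ∀ c : Bool, Odd ((w.edges.filter (fun e => φ e = c)).length)) :
    ∃ (v : V) (w : G.Walk v v), w.IsHamiltonianCycle ∧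
      ∀ c : Bool, Even ((w.edges.filter (fun e => φ e = c)).length) :=
  even_hamilton_of_odd_C4_general G he hδ φ hodd
end

section
/- Suppose the vertex set of a graph G is partitioned into two classes A and B, and G is 2-edge-coloured so that: for any two vertices x, y in the same class, every common neighbour of x and y sends edges of the same colour to x and y; and for any x ∈ A, y ∈ B, every common neighbour sends edges of opposite colours to x and y. Then every Hamilton cycle of G (with n = v(G) even) has both colour classes of even size. -/
/-!
Read the cycle two edges at a time. The two edges at the middle vertex of a step `x – w – z`
have colours whose agreement is exactly the agreement of the classes of `x` and `z`, so the
parity of the number of edges of a given colour along a walk of even length records only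
whether its endpoints lie in the same class. A Hamilton cycle of even order is a closed walk
of even length, whose endpoints trivially lie in the same class.
-/

namespace SimpleGraph

variable {V : Type*} (G : SimpleGraph V)

def EdgesAgreeWith (A : Set V) (P : Sym2 V → Prop) : Prop :=
  ∀ ⦃w x y : V⦄, G.Adj w x → G.Adj w y → ((P s(w, x) ↔ P s(w, y)) ↔ (x ∈ A ↔ y ∈ A))

variable {G} {A : Set V} {P : Sym2 V → Prop} [DecidablePred P]

theorem EdgesAgreeWith.even_length_filter_edges_iff (hP : G.EdgesAgreeWith A P) :
    ∀ {u v : V} (p : G.Walk u v), Even p.length →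
      (Even (p.edges.filter (P ·)).length ↔ (u ∈ A ↔ v ∈ A))
  | _, _, .nil, _ => by simp
  | _, _, .cons _ .nil, hp => by simp at hp
  | x, y, .cons (v := w) hxw (.cons (v := z) hwz q), hp => by
    have hq : Even q.length := by
      simpa [Walk.length_cons, Nat.even_add_one] using hp
    have ih := hP.even_length_filter_edges_iff q hq
    have hstep := hP hxw.symm hwz
    rw [Sym2.eq_swap] at hstep
    simp only [Walk.edges_cons, List.filter_cons]
    split_ifs <;> simp_all [Nat.even_add_one] <;> tauto

end SimpleGraph

theorem Bool.eq_iff_eq_iff_eq {a b c : Bool} : (a = c ↔ b = c) ↔ a = b := by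
  cases a <;> cases b <;> cases c <;> simp

/-- Suppose the vertex set of a graph `G` is partitioned into classes `A` and `Aᶜ`, and `G`
is 2-edge-coloured so that every common neighbour of two vertices in the same class sends
them edges of the same colour, while every common neighbour of two vertices in different
classes sends them edges of opposite colours. Then (for `v(G)` even) every Hamilton cycle of
`G` has both colour classes of even size. -/
theorem even_hamilton_of_agreement {V : Type*} [Fintype V] [DecidableEq V]
    (G : SimpleGraph V) (A : Set V) (φ : Sym2 V → Bool)
    (hsame : ∀ x y w : V, G.Adj w x → G.Adj w y → x ≠ y → (x ∈ A ↔ y ∈ A) →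
      φ s(w, x) = φ s(w, y))
    (hdiff : ∀ x y w : V, G.Adj w x → G.Adj w y → x ≠ y → ¬(x ∈ A ↔ y ∈ A) →
      φ s(w, x) ≠ φ s(w, y))
    (he : Even (Fintype.card V)) :
    ∀ (v : V) (w : G.Walk v v), w.IsHamiltonianCycle →
      ∀ c : Bool, Even ((w.edges.filter (fun e => φ e = c)).length) := by
  intro v w hw c
  have hagree : G.EdgesAgreeWith A (fun e => φ e = c) := by
    intro u x y hux huy
    rw [Bool.eq_iff_eq_iff_eq]
    by_cases hxy : x = y
    · simp [hxy]
    · exact ⟨fun h => by_contra (hdiff x y u hux huy hxy · h), hsame x y u hux huy hxy⟩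
  exact (hagree.even_length_filter_edges_iff w (hw.length_eq ▸ he)).2 Iff.rfl
end
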